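/- arXiv:1709.06809 — 2 statements merged into one kernel-verified Lean document; each statement's English description precedes it below -/
import Mathlib

section
/- Let A ∈ ℝ^{n×n} with comparison matrix M(A) (defined by M(A)_{ii} = -max(-a_{ii},0), M(A)_{ij} = |a_{ij}| for i≠j). If M(A) is Hurwitz, then there exists a diagonal matrix P with positive diagonal entries such that P·A + Aᵀ·P is negative definite. -/
open Matrix

/-- `A` is Hurwitz: every complex eigenvalue has negative real part. -/
def IsHurwitz {n : Type*} [Fintype n] [DecidableEq n] (A : Matrix n n ℝ) : Prop :=
  ∀ μ ∈ spectrum ℂ (A.map (algebraMap ℝ ℂ)), μ.re < 0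

/-- The comparison matrix of `A`. -/
def compMat {n : ℕ} (A : Matrix (Fin n) (Fin n) ℝ) : Matrix (Fin n) (Fin n) ℝ :=
  Matrix.of fun i j => if i = j then -max (-(A i i)) 0 else |A i j|

/-!
Write `M = M(A)`; it is a Metzler matrix (nonnegative off the diagonal). For `α` large,
`Y = α⁻¹ (M + α I)` is entrywise nonnegative and its spectrum `α⁻¹ (σ(M) + α)` lies in the open
unit disc, because `|μ + α|² = |μ|² + 2α Re μ + α² < α²` once `α` is large and `Re μ < 0`.
By Gelfand's formula `Yᵏ → 0`, so the Neumann series for `(-M)⁻¹ = α⁻¹ (I - Y)⁻¹` shows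
`(-M)⁻¹ ≥ 0` entrywise. Hence `d = (-M)⁻¹ 𝟙` and `c = (-M)⁻ᵀ 𝟙` are positive with `M d < 0` and
`Mᵀ c < 0`; in particular `m_ii < 0`, which forces `a_ii = m_ii`. For `P = diag(c / d)` and
`S = -(PA + AᵀP)` one gets `∑_{j ≠ i} |s_ij| d_j ≤ p_i ((M d)_i - m_ii d_i) + (Mᵀ c)_i - m_ii c_i
< -2 c_i m_ii = s_ii d_i`, so `diag d * S * diag d` is strictly diagonally dominant, hence
positive definite by Gershgorin's theorem.
-/

open Filter Topology Finset

section SpectralRadius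

variable {A : Type*} [NormedRing A] [NormedAlgebra ℂ A] [CompleteSpace A]

theorem tendsto_pow_atTop_nhds_zero_of_forall_norm_lt_one {a : A}
    (ha : ∀ z ∈ spectrum ℂ a, ‖z‖ < 1) : Tendsto (a ^ ·) atTop (𝓝 0) := by
  cases subsingleton_or_nontrivial A
  · simp [Subsingleton.elim _ (0 : A)]
  have hρ : spectralRadius ℂ a < (1 : NNReal) :=
    spectrum.spectralRadius_lt_of_forall_lt a fun z hz => by exact_mod_cast ha z hz
  obtain ⟨r, hρr, hr1⟩ := ENNReal.lt_iff_exists_nnreal_btwn.mp hρ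
  have hbound : ∀ᶠ k : ℕ in atTop, ‖a ^ k‖ ≤ (r : ℝ) ^ k := by
    filter_upwards [(spectrum.pow_norm_pow_one_div_tendsto_nhds_spectralRadius a).eventually
      (gt_mem_nhds hρr), eventually_gt_atTop 0] with k hk hk0
    have hroot : ‖a ^ k‖ ^ (k : ℝ)⁻¹ < r := by
      simpa using (ENNReal.ofReal_lt_iff_lt_toReal (by positivity) (by simp)).mp hk
    exact_mod_cast ((Real.rpow_inv_lt_iff_of_pos (norm_nonneg (a ^ k)) r.2
      (Nat.cast_pos.mpr hk0)).mp hroot).le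
  exact squeeze_zero_norm' hbound
    (tendsto_pow_atTop_nhds_zero_of_lt_one r.2 (by exact_mod_cast hr1))

end SpectralRadius

namespace Matrix

variable {n : Type*} [Fintype n]

def IsMetzler (M : Matrix n n ℝ) : Prop :=
  ∀ i j, i ≠ j → 0 ≤ M i j

theorem IsMetzler.diag_neg_of_mulVec_neg {M : Matrix n n ℝ} (hM : M.IsMetzler) {d : n → ℝ}
    (hd : ∀ i, 0 < d i) {i : n} (hMd : (M *ᵥ d) i < 0) : M i i < 0 := by
  by_contra! hii
  refine hMd.not_ge (sum_nonneg fun j _ => ?_)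
  obtain rfl | hij := eq_or_ne i j
  · exact mul_nonneg hii (hd i).le
  · exact mul_nonneg (hM i j hij) (hd j).le

variable [DecidableEq n]

theorem tendsto_pow_atTop_nhds_zero_of_forall_norm_lt_one {Y : Matrix n n ℝ}
    (hY : ∀ z ∈ spectrum ℂ (Y.map (algebraMap ℝ ℂ)), ‖z‖ < 1) :
    Tendsto (Y ^ ·) atTop (𝓝 0) := by
  -- any Banach algebra norm will do; this one induces the entrywise topology
  let _ : NormedRing (Matrix n n ℂ) := Matrix.linftyOpNormedRing
  let _ : NormedAlgebra ℂ (Matrix n n ℂ) := Matrix.linftyOpNormedAlgebra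
  have hre : Continuous fun X : Matrix n n ℂ => X.map Complex.re :=
    continuous_id.matrix_map Complex.continuous_re
  convert (hre.tendsto 0).comp (_root_.tendsto_pow_atTop_nhds_zero_of_forall_norm_lt_one hY)
    using 1
  · ext k : 1
    rw [Function.comp_apply, ← Matrix.map_pow]
    ext i j
    simp
  · simp

theorem apply_nonneg_of_eq_add_mul {X Y Z : Matrix n n ℝ} (hZ : ∀ i j, 0 ≤ Z i j)
    (hY : ∀ i j, 0 ≤ Y i j) (hYpow : Tendsto (Y ^ ·) atTop (𝓝 0)) (hX : X = Z + Y * X) :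
    ∀ i j, 0 ≤ X i j := by
  have hunfold : ∀ K, X = ∑ k ∈ range K, Y ^ k * Z + Y ^ K * X := by
    intro K
    induction K with
    | zero => simp
    | succ K ih =>
      conv_lhs => rw [ih]; rw [hX]
      rw [sum_range_succ, mul_add, pow_succ, mul_assoc]
      abel
  have hlower : ∀ K i j, (Y ^ K * X) i j ≤ X i j := by
    intro K i j
    conv_rhs => rw [hunfold K]
    rw [add_apply, sum_apply]
    exact le_add_of_nonneg_left <|
      sum_nonneg fun k _ => sum_nonneg fun l _ => mul_nonneg (pow_apply_nonneg hY k i l) (hZ l j)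
  have htail : Tendsto (fun K => Y ^ K * X) atTop (𝓝 0) := by
    simpa using hYpow.mul_const X
  intro i j
  exact le_of_tendsto' (((continuous_apply j).comp (continuous_apply i)).tendsto _ |>.comp htail)
    fun K => hlower K i j

theorem norm_lt_one_of_mem_spectrum_inv_smul_add {M : Matrix n n ℝ} {α : ℝ} (hα : 0 < α)
    (hspec : ∀ μ ∈ spectrum ℂ (M.map (algebraMap ℝ ℂ)), ‖μ + α‖ < α) :
    ∀ z ∈ spectrum ℂ ((α⁻¹ • (M + α • 1)).map (algebraMap ℝ ℂ)), ‖z‖ < 1 := by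
  have hmap : (α⁻¹ • (M + α • 1)).map (algebraMap ℝ ℂ)
      = (Units.mk0 (α⁻¹ : ℂ) (by simp [hα.ne'])) •
        (M.map (algebraMap ℝ ℂ) + algebraMap ℂ (Matrix n n ℂ) α) := by
    ext i j
    by_cases hij : i = j <;> simp [algebraMap_eq_diagonal, hij]
  intro z hz
  rw [hmap, spectrum.unit_smul_eq_smul, ← spectrum.add_singleton_eq] at hz
  obtain ⟨w, ⟨μ, hμ, _, rfl, rfl⟩, rfl⟩ := hz
  dsimp only
  rw [Units.val_mk0, smul_eq_mul, norm_mul, norm_inv, Complex.norm_real,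
    Real.norm_of_nonneg hα.le, inv_mul_lt_one₀ hα]
  exact hspec μ hμ

theorem spectrum_transpose {R : Type*} [CommRing R] (N : Matrix n n R) :
    spectrum R Nᵀ = spectrum R N := by
  ext z
  rw [spectrum.mem_iff, spectrum.mem_iff, isUnit_iff_isUnit_det, isUnit_iff_isUnit_det,
    ← det_transpose, transpose_sub, algebraMap_eq_diagonal, diagonal_transpose,
    transpose_transpose]

end Matrix

namespace IsHurwitz

variable {n : Type*} [Fintype n] [DecidableEq n] {M : Matrix n n ℝ}

theorem isUnit_det (h : IsHurwitz M) : IsUnit M.det := by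
  have h0 : (0 : ℂ) ∉ spectrum ℂ (M.map (algebraMap ℝ ℂ)) := fun h0 => (h 0 h0).false
  rw [spectrum.zero_mem_iff, not_not, isUnit_iff_isUnit_det, ← RingHom.mapMatrix_apply,
    ← RingHom.map_det, isUnit_iff_ne_zero, map_ne_zero] at h0
  exact isUnit_iff_ne_zero.mpr h0

theorem isUnit_det_neg (h : IsHurwitz M) : IsUnit (-M).det :=
  (isUnit_iff_isUnit_det _).mp ((isUnit_iff_isUnit_det M).mpr h.isUnit_det).neg

theorem mul_inv_neg (h : IsHurwitz M) : M * (-M)⁻¹ = -1 := by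
  rw [← neg_neg (M * _), ← neg_mul, mul_nonsing_inv _ h.isUnit_det_neg]

theorem inv_neg_mul (h : IsHurwitz M) : (-M)⁻¹ * M = -1 := by
  rw [← neg_neg (_ * M), ← mul_neg, nonsing_inv_mul _ h.isUnit_det_neg]

theorem transpose (h : IsHurwitz M) : IsHurwitz Mᵀ := by
  rw [IsHurwitz, transpose_map, spectrum_transpose]
  exact h

theorem eventually_forall_norm_add_lt (h : IsHurwitz M) :
    ∀ᶠ α : ℝ in atTop, ∀ μ ∈ spectrum ℂ (M.map (algebraMap ℝ ℂ)), ‖μ + α‖ < α := by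
  refine (M.map (algebraMap ℝ ℂ)).finite_spectrum.eventually_all.mpr fun μ hμ => ?_
  have hre := h μ hμ
  filter_upwards [eventually_gt_atTop 0, eventually_gt_atTop (‖μ‖ ^ 2 / (-2 * μ.re))]
    with α hα0 hα
  have hsq : ‖μ + α‖ ^ 2 = ‖μ‖ ^ 2 + 2 * α * μ.re + α ^ 2 := by
    simp only [Complex.sq_norm, Complex.normSq_apply, Complex.add_re, Complex.add_im,
      Complex.ofReal_re, Complex.ofReal_im]
    ring
  rw [div_lt_iff₀ (by linarith)] at hα
  exact lt_of_pow_lt_pow_left₀ 2 hα0.le (by nlinarith)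

end IsHurwitz

namespace Matrix.IsMetzler

variable {n : Type*} [Fintype n] [DecidableEq n] {M : Matrix n n ℝ}

theorem inv_neg_apply_nonneg (hM : M.IsMetzler) (h : IsHurwitz M) :
    ∀ i j, 0 ≤ (-M)⁻¹ i j := by
  obtain ⟨α, hspec, hα, hdiag⟩ : ∃ α : ℝ,
      (∀ μ ∈ spectrum ℂ (M.map (algebraMap ℝ ℂ)), ‖μ + α‖ < α) ∧ 0 < α ∧ ∀ i, -M i i ≤ α :=
    (h.eventually_forall_norm_add_lt.and <| (eventually_gt_atTop 0).and <|
      eventually_all.mpr fun i => eventually_ge_atTop (-M i i)).exists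
  set Y := α⁻¹ • (M + α • 1) with hYdef
  have hY : ∀ i j, 0 ≤ Y i j := by
    intro i j
    refine mul_nonneg (inv_nonneg.mpr hα.le) ?_
    by_cases hij : i = j
    · subst hij
      simpa [add_comm] using neg_le_iff_add_nonneg.mp (hdiag i)
    · simpa [hij] using hM i j hij
  have hfix : (-M)⁻¹ = α⁻¹ • 1 + Y * (-M)⁻¹ := by
    rw [hYdef, smul_mul, add_mul, h.mul_inv_neg, smul_mul, one_mul, smul_add, smul_smul,
      inv_mul_cancel₀ hα.ne', one_smul, smul_neg]
    abel
  refine apply_nonneg_of_eq_add_mul (fun i j => ?_) hY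
    (tendsto_pow_atTop_nhds_zero_of_forall_norm_lt_one
      (norm_lt_one_of_mem_spectrum_inv_smul_add hα hspec)) hfix
  by_cases hij : i = j <;> simp [hij, hα.le]

theorem exists_pos_mulVec_neg (hM : M.IsMetzler) (h : IsHurwitz M) :
    ∃ d : n → ℝ, (∀ i, 0 < d i) ∧ ∀ i, (M *ᵥ d) i < 0 := by
  have hG := hM.inv_neg_apply_nonneg h
  refine ⟨(-M)⁻¹ *ᵥ 1, fun i => ?_, fun i => ?_⟩
  · obtain ⟨j, hj⟩ : ∃ j, (-M)⁻¹ i j ≠ 0 := by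
      by_contra! hrow
      have hii := congr_fun₂ h.inv_neg_mul i i
      simp [mul_apply, hrow] at hii
    simp only [mulVec, dotProduct, Pi.one_apply, mul_one]
    exact sum_pos' (fun j _ => hG i j) ⟨j, mem_univ j, (hG i j).lt_of_ne' hj⟩
  · simp [mulVec_mulVec, h.mul_inv_neg, neg_mulVec]

end Matrix.IsMetzler

namespace Matrix

variable {n : Type*} [Fintype n] [DecidableEq n]

theorem posDef_of_sum_abs_lt_diag {S : Matrix n n ℝ} (hS : S.IsHermitian)
    (hdom : ∀ i, ∑ j ∈ univ.erase i, |S i j| < S i i) : S.PosDef := by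
  refine hS.posDef_iff_eigenvalues_pos.mpr fun i => ?_
  have hμ : Module.End.HasEigenvalue (toLin' S) (hS.eigenvalues i) := by
    rw [Module.End.hasEigenvalue_iff_mem_spectrum, spectrum_toLin']
    exact hS.eigenvalues_mem_spectrum_real i
  obtain ⟨k, hk⟩ := eigenvalue_mem_ball hμ
  rw [Metric.mem_closedBall, Real.dist_eq, abs_le] at hk
  simp only [Real.norm_eq_abs] at hk
  linarith [hdom k]

theorem posDef_of_sum_abs_mul_lt_diag_mul {S : Matrix n n ℝ} (hS : S.IsHermitian) {d : n → ℝ}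
    (hd : ∀ i, 0 < d i) (hdom : ∀ i, ∑ j ∈ univ.erase i, |S i j| * d j < S i i * d i) :
    S.PosDef := by
  have hD : IsUnit (diagonal d) :=
    isUnit_diagonal.mpr (Pi.isUnit_iff.mpr fun i => (hd i).ne'.isUnit)
  rw [← Matrix.IsUnit.posDef_star_left_conjugate_iff hD]
  refine posDef_of_sum_abs_lt_diag (isHermitian_conjTranspose_mul_mul _ hS) fun i => ?_
  have hT : ∀ j, (star (diagonal d) * S * diagonal d) i j = d i * S i j * d j := fun j => by
    simp [star_eq_conjTranspose, diagonal_mul, mul_diagonal]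
  simp only [hT, abs_mul, abs_of_pos (hd i), abs_of_pos (hd _), mul_assoc, ← mul_sum]
  exact mul_lt_mul_of_pos_left (by simpa [mul_comm] using hdom i) (hd i)

theorem posDef_neg_diagonal_mul_add_transpose_mul {A M : Matrix n n ℝ}
    (hdiag : ∀ i, A i i ≤ M i i) (hoff : ∀ i j, i ≠ j → |A i j| ≤ M i j) {c d : n → ℝ}
    (hc : ∀ i, 0 < c i) (hd : ∀ i, 0 < d i) (hMd : ∀ i, (M *ᵥ d) i < 0)
    (hMc : ∀ i, (Mᵀ *ᵥ c) i < 0) :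
    (-(diagonal (c / d) * A + Aᵀ * diagonal (c / d))).PosDef := by
  set p := c / d
  have hp : ∀ i, 0 < p i := fun i => div_pos (hc i) (hd i)
  have hpd : ∀ i, p i * d i = c i := fun i => div_mul_cancel₀ (c i) (hd i).ne'
  set S := -(diagonal p * A + Aᵀ * diagonal p)
  have hS : ∀ i j, S i j = -(p i * A i j + A j i * p j) := fun i j => by
    simp [S, diagonal_mul, mul_diagonal]
  have hherm : S.IsHermitian := by
    ext i j
    simp only [conjTranspose_apply, star_trivial, hS]
    ring
  refine posDef_of_sum_abs_mul_lt_diag_mul hherm hd fun i => ?_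
  have hrow : ∑ j ∈ univ.erase i, M i j * d j = (M *ᵥ d) i - M i i * d i := by
    rw [sum_erase_eq_sub (mem_univ i)]; rfl
  have hcol : ∑ j ∈ univ.erase i, M j i * c j = (Mᵀ *ᵥ c) i - M i i * c i := by
    rw [sum_erase_eq_sub (mem_univ i)]; rfl
  have hterm : ∀ j ∈ univ.erase i, |S i j| * d j ≤ p i * (M i j * d j) + M j i * c j := by
    intro j hj
    have hji : j ≠ i := ne_of_mem_erase hj
    calc |S i j| * d j ≤ (p i * |A i j| + |A j i| * p j) * d j := by
          rw [hS, abs_neg]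
          refine mul_le_mul_of_nonneg_right ((abs_add_le _ _).trans_eq ?_) (hd j).le
          rw [abs_mul, abs_mul, abs_of_pos (hp i), abs_of_pos (hp j)]
      _ ≤ (p i * M i j + M j i * p j) * d j :=
          mul_le_mul_of_nonneg_right
            (add_le_add (mul_le_mul_of_nonneg_left (hoff i j hji.symm) (hp i).le)
              (mul_le_mul_of_nonneg_right (hoff j i hji) (hp j).le)) (hd j).le
      _ = p i * (M i j * d j) + M j i * c j := by rw [← hpd j]; ring
  calc ∑ j ∈ univ.erase i, |S i j| * d j
      ≤ ∑ j ∈ univ.erase i, (p i * (M i j * d j) + M j i * c j) := sum_le_sum hterm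
    _ = p i * ((M *ᵥ d) i - M i i * d i) + ((Mᵀ *ᵥ c) i - M i i * c i) := by
        rw [sum_add_distrib, ← mul_sum, hrow, hcol]
    _ < p i * -(M i i * d i) + -(M i i * c i) := by
        linarith [mul_lt_mul_of_pos_left (hMd i) (hp i), hMc i]
    _ = -2 * c i * M i i := by rw [← hpd i]; ring
    _ ≤ S i i * d i := by
        rw [hS, ← hpd i]
        nlinarith [hdiag i, mul_pos (hp i) (hd i)]

end Matrix

theorem compMat_apply_of_ne {n : ℕ} (A : Matrix (Fin n) (Fin n) ℝ) {i j : Fin n} (h : i ≠ j) :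
    compMat A i j = |A i j| := by
  simp [compMat, h]

theorem compMat_apply_self_of_neg {n : ℕ} (A : Matrix (Fin n) (Fin n) ℝ) {i : Fin n}
    (h : compMat A i i < 0) : compMat A i i = A i i := by
  have hA : A i i < 0 := by simpa [compMat] using h
  simp [compMat, hA.le]

theorem comparison_hurwitz_implies_diagonal_stable {n : ℕ} (A : Matrix (Fin n) (Fin n) ℝ)
    (h : IsHurwitz (compMat A)) :
    ∃ p : Fin n → ℝ, (∀ i, 0 < p i) ∧
      (-(Matrix.diagonal p * A + Aᵀ * Matrix.diagonal p)).PosDef := by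
  have hM : (compMat A).IsMetzler := fun i j hij => by
    rw [compMat_apply_of_ne A hij]
    exact abs_nonneg _
  have hMT : (compMat A)ᵀ.IsMetzler := fun i j hij => hM j i hij.symm
  obtain ⟨d, hd, hMd⟩ := hM.exists_pos_mulVec_neg h
  obtain ⟨c, hc, hMc⟩ := hMT.exists_pos_mulVec_neg h.transpose
  have hdiag : ∀ i, A i i ≤ compMat A i i := fun i =>
    (compMat_apply_self_of_neg A (hM.diag_neg_of_mulVec_neg hd (hMd i))).ge
  have hoff : ∀ i j, i ≠ j → |A i j| ≤ compMat A i j := fun i j hij =>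
    (compMat_apply_of_ne A hij).ge
  exact ⟨c / d, fun i => div_pos (hc i) (hd i),
    posDef_neg_diagonal_mul_add_transpose_mul hdiag hoff hc hd hMd hMc⟩
end

section
/- Block Gershgorin theorem: Let A ∈ ℝ^{N×N} be partitioned into blocks A_{ij} ∈ ℝ^{k_i×k_j} with Σ k_i = N. Then for every eigenvalue λ of A there exists an index i such that either λ is an eigenvalue of A_{ii}, or ‖(λI - A_{ii})^{-1}‖₂^{-1} ≤ Σ_{j≠i} ‖A_{ij}‖₂. -/
open Matrix Finset

/-- Spectral norm (maximal singular value) of a complex matrix. -/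
noncomputable def specNorm {p q : ℕ} (M : Matrix (Fin p) (Fin q) ℂ) : ℝ :=
  ‖LinearMap.toContinuousLinearMap (Matrix.toEuclideanLin M)‖

/-- Spectral norm (maximal singular value) of a real matrix. -/
noncomputable def specNormR {p q : ℕ} (M : Matrix (Fin p) (Fin q) ℝ) : ℝ :=
  ‖LinearMap.toContinuousLinearMap (Matrix.toEuclideanLin M)‖

/-- The `(i, j)` block of an `α`-partitioned matrix. -/
def blk {n : ℕ} {k : Fin n → ℕ} {R : Type*}
    (A : Matrix ((i : Fin n) × Fin (k i)) ((i : Fin n) × Fin (k i)) R)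
    (i j : Fin n) : Matrix (Fin (k i)) (Fin (k j)) R :=
  Matrix.of fun a b => A ⟨i, a⟩ ⟨j, b⟩

/-!
Take an eigenvector `v` of `A`, cut it into blocks `x j`, and let `i` be a block of maximal
norm, so `x i ≠ 0`. Row `i` of `A v = λ v` reads `(λ I - A_ii) x_i = ∑_{j ≠ i} A_ij x_j`. If
`λ I - A_ii` is invertible this gives
`‖x_i‖ ≤ ‖(λ I - A_ii)⁻¹‖ ∑_{j ≠ i} ‖A_ij‖ ‖x_j‖ ≤ ‖(λ I - A_ii)⁻¹‖ (∑_{j ≠ i} ‖A_ij‖) ‖x_i‖`.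
The complexification of a real matrix has no larger norm, because a complex vector splits
orthogonally into its real and imaginary parts.
-/

open WithLp

lemma specNorm_nonneg {p q : ℕ} (M : Matrix (Fin p) (Fin q) ℂ) : 0 ≤ specNorm M :=
  norm_nonneg _

lemma specNormR_nonneg {p q : ℕ} (M : Matrix (Fin p) (Fin q) ℝ) : 0 ≤ specNormR M :=
  norm_nonneg _

lemma norm_toLp_mulVec_le_specNorm {p q : ℕ} (M : Matrix (Fin p) (Fin q) ℂ) (w : Fin q → ℂ) :
    ‖toLp 2 (M *ᵥ w)‖ ≤ specNorm M * ‖toLp 2 w‖ :=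
  (LinearMap.toContinuousLinearMap (Matrix.toEuclideanLin M)).le_opNorm (toLp 2 w)

lemma norm_toLp_mulVec_le_specNormR {p q : ℕ} (M : Matrix (Fin p) (Fin q) ℝ) (w : Fin q → ℝ) :
    ‖toLp 2 (M *ᵥ w)‖ ≤ specNormR M * ‖toLp 2 w‖ :=
  (LinearMap.toContinuousLinearMap (Matrix.toEuclideanLin M)).le_opNorm (toLp 2 w)

lemma norm_toLp_sq_eq_re_add_im {p : ℕ} (v : Fin p → ℂ) :
    ‖toLp 2 v‖ ^ 2 = ‖toLp 2 fun a => (v a).re‖ ^ 2 + ‖toLp 2 fun a => (v a).im‖ ^ 2 := by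
  simp only [EuclideanSpace.norm_sq_eq, ← Finset.sum_add_distrib, Real.norm_eq_abs, sq_abs,
    ← Complex.normSq_add_mul_I, Complex.re_add_im, Complex.sq_norm]

lemma re_mulVec_map_ofReal {p q : ℕ} (M : Matrix (Fin p) (Fin q) ℝ) (w : Fin q → ℂ) :
    (fun a => ((M.map (algebraMap ℝ ℂ) *ᵥ w) a).re) = M *ᵥ fun b => (w b).re := by
  ext a
  simp [Matrix.mulVec, dotProduct, Complex.re_sum]

lemma im_mulVec_map_ofReal {p q : ℕ} (M : Matrix (Fin p) (Fin q) ℝ) (w : Fin q → ℂ) :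
    (fun a => ((M.map (algebraMap ℝ ℂ) *ᵥ w) a).im) = M *ᵥ fun b => (w b).im := by
  ext a
  simp [Matrix.mulVec, dotProduct, Complex.im_sum]

lemma specNorm_map_ofReal_le {p q : ℕ} (M : Matrix (Fin p) (Fin q) ℝ) :
    specNorm (M.map (algebraMap ℝ ℂ)) ≤ specNormR M := by
  refine ContinuousLinearMap.opNorm_le_bound _ (specNormR_nonneg M) fun w => ?_
  set u := ofLp w
  have hre := norm_toLp_mulVec_le_specNormR M fun b => (u b).re
  have him := norm_toLp_mulVec_le_specNormR M fun b => (u b).im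
  refine le_of_pow_le_pow_left₀ two_ne_zero
    (mul_nonneg (specNormR_nonneg M) (norm_nonneg w)) ?_
  calc ‖toLp 2 (M.map (algebraMap ℝ ℂ) *ᵥ u)‖ ^ 2
      = ‖toLp 2 (M *ᵥ fun b => (u b).re)‖ ^ 2 + ‖toLp 2 (M *ᵥ fun b => (u b).im)‖ ^ 2 := by
        rw [norm_toLp_sq_eq_re_add_im, re_mulVec_map_ofReal, im_mulVec_map_ofReal]
    _ ≤ (specNormR M * ‖toLp 2 fun b => (u b).re‖) ^ 2
        + (specNormR M * ‖toLp 2 fun b => (u b).im‖) ^ 2 := by gcongr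
    _ = (specNormR M * ‖w‖) ^ 2 := by
        rw [mul_pow, mul_pow, ← mul_add, ← norm_toLp_sq_eq_re_add_im, toLp_ofLp, mul_pow]

lemma norm_toLp_le_specNorm_inv_mul {p : ℕ} {B : Matrix (Fin p) (Fin p) ℂ} (hB : IsUnit B)
    (x : Fin p → ℂ) : ‖toLp 2 x‖ ≤ specNorm B⁻¹ * ‖toLp 2 (B *ᵥ x)‖ := by
  simpa [Matrix.mulVec_mulVec, Matrix.nonsing_inv_mul B ((Matrix.isUnit_iff_isUnit_det B).1 hB)]
    using norm_toLp_mulVec_le_specNorm B⁻¹ (B *ᵥ x)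

lemma inv_specNorm_inv_le_sum_specNorm {ι : Type*} {p : ℕ} {q : ι → ℕ} (s : Finset ι)
    {B : Matrix (Fin p) (Fin p) ℂ} (hB : IsUnit B) (C : ∀ j, Matrix (Fin p) (Fin (q j)) ℂ)
    {x : Fin p → ℂ} (hx : x ≠ 0) {y : ∀ j, Fin (q j) → ℂ}
    (hy : ∀ j ∈ s, ‖toLp 2 (y j)‖ ≤ ‖toLp 2 x‖)
    (h : B *ᵥ x = ∑ j ∈ s, C j *ᵥ y j) :
    (specNorm B⁻¹)⁻¹ ≤ ∑ j ∈ s, specNorm (C j) := by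
  have hx0 : 0 < ‖toLp 2 x‖ := norm_pos_iff.2 fun h0 => hx (by simpa using congrArg ofLp h0)
  have key : ‖toLp 2 x‖ ≤ specNorm B⁻¹ * (∑ j ∈ s, specNorm (C j)) * ‖toLp 2 x‖ :=
    calc ‖toLp 2 x‖ ≤ specNorm B⁻¹ * ‖toLp 2 (B *ᵥ x)‖ := norm_toLp_le_specNorm_inv_mul hB x
      _ ≤ specNorm B⁻¹ * ∑ j ∈ s, ‖toLp 2 (C j *ᵥ y j)‖ := by
          gcongr
          · exact specNorm_nonneg _
          · rw [h, WithLp.toLp_sum]; exact norm_sum_le _ _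
      _ ≤ specNorm B⁻¹ * ∑ j ∈ s, specNorm (C j) * ‖toLp 2 x‖ := by
          gcongr with j hj
          · exact specNorm_nonneg _
          · exact (norm_toLp_mulVec_le_specNorm _ _).trans
              (mul_le_mul_of_nonneg_left (hy j hj) (specNorm_nonneg _))
      _ = specNorm B⁻¹ * (∑ j ∈ s, specNorm (C j)) * ‖toLp 2 x‖ := by
          rw [← Finset.sum_mul, mul_assoc]
  have hNT : 1 ≤ specNorm B⁻¹ * ∑ j ∈ s, specNorm (C j) :=
    le_of_mul_le_mul_right (by simpa using key) hx0
  have hN : 0 < specNorm B⁻¹ := (specNorm_nonneg _).lt_of_ne fun h0 => by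
    rw [← h0, zero_mul] at hNT
    exact zero_lt_one.not_ge hNT
  exact (inv_le_iff_one_le_mul₀' hN).2 hNT

lemma Matrix.exists_mulVec_eq_smul_of_mem_spectrum {K ι : Type*} [Field K] [Fintype ι]
    [DecidableEq ι] {M : Matrix ι ι K} {μ : K} (h : μ ∈ spectrum K M) :
    ∃ v ≠ 0, M *ᵥ v = μ • v := by
  rw [← Matrix.spectrum_toLin', ← Module.End.hasEigenvalue_iff_mem_spectrum] at h
  obtain ⟨v, hv⟩ := h.exists_hasEigenvector
  exact ⟨v, hv.2, Module.End.mem_eigenspace_iff.1 hv.1⟩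

lemma smul_one_sub_blk_mulVec_eq_sum {n : ℕ} {k : Fin n → ℕ} {R : Type*} [CommRing R]
    {A : Matrix ((i : Fin n) × Fin (k i)) ((i : Fin n) × Fin (k i)) R} {μ : R}
    {v : ((i : Fin n) × Fin (k i)) → R} (hv : A *ᵥ v = μ • v) (i : Fin n) :
    (μ • 1 - blk A i i) *ᵥ (fun b => v ⟨i, b⟩)
      = ∑ j ∈ Finset.univ.erase i, blk A i j *ᵥ fun b => v ⟨j, b⟩ := by
  ext a
  have hrow : (A *ᵥ v) ⟨i, a⟩ = ∑ j, (blk A i j *ᵥ fun b => v ⟨j, b⟩) a := by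
    simp only [Matrix.mulVec, dotProduct, ← Finset.univ_sigma_univ, Finset.sum_sigma]
    rfl
  rw [hv, Pi.smul_apply, ← Finset.add_sum_erase _ _ (Finset.mem_univ i)] at hrow
  rw [Matrix.sub_mulVec, Matrix.smul_mulVec, Matrix.one_mulVec, Pi.sub_apply, Finset.sum_apply,
    Pi.smul_apply, hrow, add_sub_cancel_left]

theorem block_gershgorin {n : ℕ} (k : Fin n → ℕ)
    (A : Matrix ((i : Fin n) × Fin (k i)) ((i : Fin n) × Fin (k i)) ℝ)
    (lam : ℂ) (hlam : lam ∈ spectrum ℂ (A.map (algebraMap ℝ ℂ))) :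
    ∃ i : Fin n,
      lam ∈ spectrum ℂ ((blk A i i).map (algebraMap ℝ ℂ)) ∨
      (specNorm ((lam • (1 : Matrix (Fin (k i)) (Fin (k i)) ℂ)
          - (blk A i i).map (algebraMap ℝ ℂ))⁻¹))⁻¹
        ≤ ∑ j ∈ Finset.univ.erase i, specNormR (blk A i j) := by
  obtain ⟨v, hv0, hv⟩ := Matrix.exists_mulVec_eq_smul_of_mem_spectrum hlam
  set x : ∀ j, Fin (k j) → ℂ := fun j b => v ⟨j, b⟩
  obtain ⟨p, hp⟩ := Function.ne_iff.1 hv0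
  obtain ⟨i, -, hmax⟩ := Finset.exists_max_image Finset.univ (fun j => ‖toLp 2 (x j)‖)
    ⟨p.1, Finset.mem_univ _⟩
  refine ⟨i, or_iff_not_imp_left.2 fun hspec => ?_⟩
  rw [spectrum.notMem_iff, Algebra.algebraMap_eq_smul_one] at hspec
  have hxi : x i ≠ 0 := fun h0 => by
    have hxp : x p.1 = 0 := by simpa [h0] using hmax p.1 (Finset.mem_univ _)
    exact hp (congrFun hxp p.2)
  exact (inv_specNorm_inv_le_sum_specNorm _ hspec _ hxi (fun j _ => hmax j (Finset.mem_univ j))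
    (smul_one_sub_blk_mulVec_eq_sum hv i)).trans
    (Finset.sum_le_sum fun j _ => specNorm_map_ofReal_le _)
end
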